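/- arXiv:2301.04624 — 2 statements merged into one kernel-verified Lean document; each statement's English description precedes it below -/
import Mathlib

section
/- Let k ≥ 2 and let d, D be positive integers with k ≤ dD, and let C_k be the associated transfer matrix. Then μ₂ = (dD² − d)/(d²D² − 1) is an eigenvalue of C_k, and its algebraic multiplicity is at least k(k−1)/2 (the number of transpositions in S_k). -/
open Equiv Matrix

/-- Number of cycles of a permutation, counting fixed points as 1-cycles. -/
noncomputable def cyc {k : ℕ} (π : Equiv.Perm (Fin k)) : ℕ :=
  (k - π.cycleType.sum) + Multiset.card π.cycleType

/-- Gram matrix `G(q)_{στ} = q^{#(στ⁻¹)}`. -/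
noncomputable def Gram (k q : ℕ) :
    Matrix (Equiv.Perm (Fin k)) (Equiv.Perm (Fin k)) ℝ :=
  Matrix.of fun σ τ => (q : ℝ) ^ cyc (σ * τ⁻¹)

/-- Weingarten matrix `W = G(q)⁻¹`, so that `Wg(στ⁻¹, q) = W σ τ`. -/
noncomputable def WgM (k q : ℕ) :
    Matrix (Equiv.Perm (Fin k)) (Equiv.Perm (Fin k)) ℝ :=
  (Gram k q)⁻¹

/-- Transfer matrix `⟨τ|C_k|θ⟩ = Σ_σ Wg(στ⁻¹, dD) d^{#(σ)} D^{#(σθ⁻¹)}`. -/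
noncomputable def Ck (k d D : ℕ) :
    Matrix (Equiv.Perm (Fin k)) (Equiv.Perm (Fin k)) ℝ :=
  Matrix.of fun τ θ =>
    ∑ σ : Equiv.Perm (Fin k),
      WgM k (d * D) σ τ * (d : ℝ) ^ cyc σ * (D : ℝ) ^ cyc (σ * θ⁻¹)

/-!
The Gram matrix factors as `G(q) = Fᵀ F`, where `F` has a row for each pair `(i, j)` of
`q`-colourings of `{1, …, k}` and `F_{(i,j),σ} = [j = i ∘ σ]`; evaluating at `(i, i ∘ τ)` with `i`
injective shows that `F` is injective when `k ≤ q`, so `G(q)` is invertible, and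
`C_k = Wg · diag(d^{#σ}) · G(D)`.

Right multiplication by a transposition changes the number of cycles by exactly one: by at most
one because a 2-colouring invariant under `σ` and constant on `{x, y}` is invariant under
`σ (x y)`, and not by zero because the sign flips. Hence for each transposition `t` the vector
`v_t = (dD² + 1) e_t − D(d + 1) e_1` satisfies `diag(d^{#σ}) G(D) v_t = μ₂ G(dD) v_t`, that is
`C_k v_t = μ₂ v_t`. These `k(k−1)/2` vectors are linearly independent, and the geometric
multiplicity of an eigenvalue bounds its algebraic multiplicity.
-/

theorem Nat.card_pow_card_sub_one_le_card_apply_eq {Q γ : Type*} [Finite Q] [Finite γ]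
    [Nonempty γ] (u v : Q) :
    Nat.card γ ^ (Nat.card Q - 1) ≤ Nat.card {g : Q → γ // g u = g v} := by
  classical
  by_cases huv : u = v
  · subst huv
    rw [Nat.card_congr (subtypeUnivEquiv fun g => rfl), Nat.card_fun]
    exact Nat.pow_le_pow_right Nat.card_pos (Nat.sub_le _ _)
  · let extend (h : {z // z ≠ v} → γ) : {g : Q → γ // g u = g v} :=
      ⟨fun z => if hz : z = v then h ⟨u, huv⟩ else h ⟨z, hz⟩, by simp [huv]⟩
    have hinj : Function.Injective extend := fun h h' hh => funext fun z => by
      simpa [extend, z.2] using congrFun (congrArg Subtype.val hh) z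
    have hcard := Nat.card_le_card_of_injective extend hinj
    have : Fintype Q := .ofFinite Q
    rwa [Nat.card_fun, Nat.card_eq_fintype_card (α := {z // z ≠ v}), Fintype.card_subtype_compl,
      Fintype.card_subtype_eq, ← Nat.card_eq_fintype_card] at hcard

theorem Equiv.comp_swap_eq_self {α β : Type*} [DecidableEq α] {f : α → β} {x y : α}
    (h : f x = f y) : f ∘ Equiv.swap x y = f := by
  rw [comp_swap_eq_update, h, Function.update_eq_self, ← h, Function.update_eq_self]

namespace Equiv.Perm

variable {α : Type*}

noncomputable def numCycles (π : Perm α) : ℕ := Nat.card (Quotient (SameCycle.setoid π))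

theorem comp_eq_self_iff_le_ker [Finite α] (π : Perm α) {β : Type*} (f : α → β) :
    f ∘ π = f ↔ SameCycle.setoid π ≤ Setoid.ker f := by
  refine ⟨fun h => Setoid.le_def.2 fun {a b} hab => ?_, fun h => funext fun a => ?_⟩
  · obtain ⟨n, rfl⟩ := hab.exists_nat_pow_eq
    rw [Setoid.ker_def, coe_pow, ← Function.comp_apply (f := f), Function.iterate_invariant h]
  · exact Setoid.le_def.1 h (sameCycle_apply_left.2 SameCycle.rfl)

theorem card_comp_eq_self [Finite α] (π : Perm α) (β : Type*) :
    Nat.card {f : α → β // f ∘ π = f} = Nat.card β ^ π.numCycles := by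
  rw [Nat.card_congr ((subtypeEquivRight (comp_eq_self_iff_le_ker π)).trans
    (Setoid.liftEquiv _)), Nat.card_fun, numCycles]

theorem comp_eq_comp_iff {β : Type*} (i : α → β) (σ τ : Perm α) :
    i ∘ σ = i ∘ τ ↔ i ∘ ⇑(σ * τ⁻¹) = i := by
  rw [Perm.coe_mul, ← Function.comp_assoc, Perm.inv_def, Equiv.comp_symm_eq, eq_comm]

theorem numCycles_le_numCycles_mul_swap_add_one [Finite α] [DecidableEq α] (σ : Perm α)
    (x y : α) :
    σ.numCycles ≤ (σ * swap x y).numCycles + 1 := by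
  let Q := Quotient (SameCycle.setoid σ)
  have hinv : ∀ g : {g : Q → Bool // g ⟦x⟧ = g ⟦y⟧},
      (g.1 ∘ Quotient.mk _) ∘ ⇑(σ * swap x y) = g.1 ∘ Quotient.mk _ := by
    intro g
    have hσ : (g.1 ∘ Quotient.mk _) ∘ σ = g.1 ∘ Quotient.mk _ :=
      funext fun a => congrArg g.1 (Quotient.sound (sameCycle_apply_left.2 SameCycle.rfl))
    rw [coe_mul, ← Function.comp_assoc, hσ, comp_swap_eq_self (f := g.1 ∘ Quotient.mk _) g.2]
  have hinj : Function.Injective fun g : {g : Q → Bool // g ⟦x⟧ = g ⟦y⟧} =>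
      (⟨g.1 ∘ Quotient.mk _, hinv g⟩ : {f : α → Bool // f ∘ ⇑(σ * swap x y) = f}) :=
    fun g g' h => Subtype.ext (Quotient.mk_surjective.injective_comp_right
      (congrArg Subtype.val h))
  have hcard := (Nat.card_pow_card_sub_one_le_card_apply_eq ⟦x⟧ ⟦y⟧).trans
    (Nat.card_le_card_of_injective _ hinj)
  rw [card_comp_eq_self, Nat.card_eq_fintype_card (α := Bool), Fintype.card_bool] at hcard
  exact Nat.le_add_of_sub_le ((Nat.pow_le_pow_iff_right one_lt_two).1 hcard)

section Fintype

variable [Fintype α] [DecidableEq α]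

def cycleLabel (π : Perm α) (a : α) : {x // x ∉ π.support} ⊕ π.cycleFactorsFinset :=
  if h : a ∈ π.support then .inr ⟨π.cycleOf a, cycleOf_mem_cycleFactorsFinset_iff.2 h⟩
  else .inl ⟨a, h⟩

theorem sameCycle_iff_cycleLabel_eq (π : Perm α) (a b : α) :
    π.SameCycle a b ↔ π.cycleLabel a = π.cycleLabel b := by
  by_cases ha : a ∈ π.support <;> by_cases hb : b ∈ π.support <;>
    simp only [cycleLabel, ha, hb, dite_true, dite_false, Sum.inr.injEq, Sum.inl.injEq,
      reduceCtorEq, Subtype.mk.injEq, iff_false]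
  · exact sameCycle_iff_cycleOf_eq_of_mem_support ha hb
  · exact fun h => hb (h.mem_support_iff.1 ha)
  · exact fun h => ha (h.mem_support_iff.2 hb)
  · exact ⟨fun h => h.eq_of_left (notMem_support.1 ha), fun h => h ▸ SameCycle.rfl⟩

theorem cycleLabel_surjective (π : Perm α) : Function.Surjective π.cycleLabel := by
  rintro (⟨a, ha⟩ | ⟨c, hc⟩)
  · exact ⟨a, by simp [cycleLabel, ha]⟩
  · obtain ⟨a, hac⟩ := (mem_cycleFactorsFinset_iff.1 hc).1.nonempty_support
    have ha : a ∈ π.support := mem_cycleFactorsFinset_support_le hc hac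
    exact ⟨a, by simp [cycleLabel, ha, cycle_is_cycleOf hac hc]⟩

theorem numCycles_eq (π : Perm α) :
    π.numCycles = (Fintype.card α - π.cycleType.sum) + Multiset.card π.cycleType := by
  have hker : SameCycle.setoid π = Setoid.ker π.cycleLabel :=
    Setoid.ext π.sameCycle_iff_cycleLabel_eq
  rw [numCycles, hker, Nat.card_congr (Setoid.quotientKerEquivOfSurjective _
    π.cycleLabel_surjective), Nat.card_sum, Nat.card_eq_fintype_card, Nat.card_eq_fintype_card,
    Fintype.card_subtype_compl, Fintype.card_coe, Fintype.card_coe, sum_cycleType, cycleType_def,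
    Multiset.card_map]
  rfl

theorem sign_eq_neg_one_pow_card_add_numCycles (π : Perm α) :
    sign π = (-1) ^ (Fintype.card α + π.numCycles) := by
  obtain ⟨m, hm⟩ := Nat.exists_eq_add_of_le π.sum_cycleType_le
  rw [sign_of_cycleType, numCycles_eq, hm, Nat.add_sub_cancel_left]
  have : π.cycleType.sum + m + (m + Multiset.card π.cycleType) =
      π.cycleType.sum + Multiset.card π.cycleType + 2 * m := by ring
  rw [this, pow_add (-1 : ℤˣ) _ (2 * m), pow_mul, neg_one_sq, one_pow, mul_one]

theorem numCycles_mul_swap_ne (σ : Perm α) {x y : α} (hxy : x ≠ y) :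
    (σ * swap x y).numCycles ≠ σ.numCycles := by
  intro h
  have hsign : sign (σ * swap x y) = -sign σ := by rw [sign_mul, sign_swap hxy, mul_neg_one]
  rw [sign_eq_neg_one_pow_card_add_numCycles, sign_eq_neg_one_pow_card_add_numCycles, h] at hsign
  exact units_ne_neg_self _ hsign

theorem numCycles_mul_swap (σ : Perm α) {x y : α} (hxy : x ≠ y) :
    (σ * swap x y).numCycles = σ.numCycles + 1 ∨
      σ.numCycles = (σ * swap x y).numCycles + 1 := by
  have h₁ := σ.numCycles_le_numCycles_mul_swap_add_one x y
  have h₂ := (σ * swap x y).numCycles_le_numCycles_mul_swap_add_one x y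
  rw [mul_swap_mul_self] at h₂
  have h₃ := σ.numCycles_mul_swap_ne hxy
  omega

theorem choose_two_le_natCard_isSwap :
    (Nat.card α).choose 2 ≤ Nat.card {t : Perm α // t.IsSwap} := by
  rw [Nat.card_eq_fintype_card, ← Fintype.card_finset_len, ← Nat.card_eq_fintype_card]
  refine Nat.card_le_card_of_surjective
    (fun t => ⟨t.1.support, card_support_eq_two.2 t.2⟩) fun ⟨s, hs⟩ => ?_
  obtain ⟨x, y, hxy, rfl⟩ := Finset.card_eq_two.1 hs
  exact ⟨⟨swap x y, x, y, hxy, rfl⟩, Subtype.ext (support_swap hxy)⟩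

end Fintype

end Equiv.Perm

theorem Matrix.natCard_le_rootMultiplicity_charpoly {K n ι : Type*} [Field K] [Fintype n]
    [DecidableEq n] [Finite ι] (A : Matrix n n K) {μ : K} {v : ι → n → K}
    (hv : LinearIndependent K v) (hAv : ∀ i, A *ᵥ v i = μ • v i) :
    Nat.card ι ≤ A.charpoly.rootMultiplicity μ := by
  have : Fintype ι := .ofFinite ι
  let E := Module.End.eigenspace (toLin' A) μ
  let w (i : ι) : E := ⟨v i, Module.End.mem_eigenspace_iff.2 (by simpa using hAv i)⟩
  have hw : LinearIndependent K w := .of_comp E.subtype hv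
  calc Nat.card ι = Fintype.card ι := Nat.card_eq_fintype_card
    _ ≤ Module.finrank K E := hw.fintype_card_le_finrank
    _ ≤ (toLin' A).charpoly.rootMultiplicity μ := LinearMap.finrank_eigenspace_le _ _
    _ = A.charpoly.rootMultiplicity μ := by rw [charpoly_toLin']

theorem linearIndependent_single_sub {ι ι' K : Type*} [Field K] [DecidableEq ι] {f : ι' → ι}
    (hf : Function.Injective f) {b : K} (hb : b ≠ 0) {w : ι → K} (hw : ∀ j, w (f j) = 0) :
    LinearIndependent K fun j => Pi.single (f j) b - w := by
  classical
  refine linearIndependent_iff'.2 fun s g hg i hi => ?_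
  simpa [Finset.sum_apply, Pi.single_apply, hf.eq_iff, hw, hi, hb] using congrFun hg (f i)

theorem cyc_eq_numCycles {k : ℕ} (π : Perm (Fin k)) : cyc π = π.numCycles := by
  rw [Perm.numCycles_eq, Fintype.card_fin]
  rfl

noncomputable def gramFactor (k q : ℕ) :
    Matrix ((Fin k → Fin q) × (Fin k → Fin q)) (Perm (Fin k)) ℝ :=
  of fun p σ => if p.2 = p.1 ∘ σ then 1 else 0

theorem Gram_eq_transpose_mul (k q : ℕ) : Gram k q = (gramFactor k q)ᵀ * gramFactor k q := by
  ext σ τ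
  simp only [Gram, gramFactor, mul_apply, transpose_apply, of_apply, Fintype.sum_prod_type,
    ite_mul, one_mul, zero_mul, Finset.sum_ite_eq', Finset.mem_univ, if_true]
  rw [Finset.sum_boole, ← Fintype.card_subtype, ← Nat.card_eq_fintype_card,
    Nat.card_congr (Equiv.subtypeEquivRight (Perm.comp_eq_comp_iff · σ τ)), Perm.card_comp_eq_self,
    Nat.card_fin, cyc_eq_numCycles]
  push_cast
  rfl

theorem gramFactor_mulVec_injective {k q : ℕ} (hkq : k ≤ q) :
    Function.Injective (gramFactor k q).mulVec := by
  intro c c' h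
  funext τ
  have hi := (Fin.castLE_injective hkq).comp_left (α := Fin k)
  simpa [gramFactor, mulVec, dotProduct, hi.eq_iff, DFunLike.coe_fn_eq, eq_comm] using
    congrFun h (Fin.castLE hkq, Fin.castLE hkq ∘ τ)

theorem isUnit_Gram {k q : ℕ} (hkq : k ≤ q) : IsUnit (Gram k q) := by
  rw [← mulVec_injective_iff_isUnit, Gram_eq_transpose_mul, ← coe_mulVecLin,
    ← LinearMap.ker_eq_bot, ker_mulVecLin_transpose_mul_self, LinearMap.ker_eq_bot, coe_mulVecLin]
  exact gramFactor_mulVec_injective hkq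

theorem WgM_transpose (k q : ℕ) : (WgM k q)ᵀ = WgM k q := by
  rw [WgM, transpose_nonsing_inv, Gram_eq_transpose_mul, transpose_mul, transpose_transpose]

theorem Ck_eq_WgM_mul (k d D : ℕ) :
    Ck k d D = WgM k (d * D) * (diagonal (fun σ => (d : ℝ) ^ cyc σ) * Gram k D) := by
  ext τ θ
  rw [← WgM_transpose, mul_apply]
  simp only [Ck, Gram, diagonal_mul, transpose_apply, of_apply, mul_assoc]

noncomputable def swapEigenvector {k : ℕ} (d D : ℕ) (t : Perm (Fin k)) : Perm (Fin k) → ℝ :=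
  (Pi.single t ((d : ℝ) * D ^ 2 + 1) : Perm (Fin k) → ℝ) - Pi.single 1 ((D : ℝ) * (d + 1))

/- The coefficients of `swapEigenvector` are chosen so that both cases `#(σt) = #σ ± 1` give the
same ratio `μ₂`. -/
theorem mu2_eigen_identity {d D : ℝ} (h : d ^ 2 * D ^ 2 ≠ 1) {n m : ℕ}
    (hnm : m = n + 1 ∨ n = m + 1) :
    d ^ n * ((d * D ^ 2 + 1) * D ^ m - D * (d + 1) * D ^ n) =
      (d * D ^ 2 - d) / (d ^ 2 * D ^ 2 - 1) *
        ((d * D ^ 2 + 1) * (d * D) ^ m - D * (d + 1) * (d * D) ^ n) := by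
  rw [div_mul_eq_mul_div, eq_div_iff (sub_ne_zero.2 h)]
  rcases hnm with rfl | rfl <;> ring

theorem diagonal_mul_Gram_mulVec_swapEigenvector {k d D : ℕ} (hdD : 2 ≤ d * D) {x y : Fin k}
    (hxy : x ≠ y) :
    (diagonal (fun σ => (d : ℝ) ^ cyc σ) * Gram k D) *ᵥ swapEigenvector d D (swap x y) =
      ((d * D ^ 2 - d) / (d ^ 2 * D ^ 2 - 1) : ℝ) •
        (Gram k (d * D) *ᵥ swapEigenvector d D (swap x y)) := by
  have h : (d : ℝ) ^ 2 * D ^ 2 ≠ 1 := by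
    have : (2 : ℝ) ≤ d * D := by exact_mod_cast hdD
    nlinarith
  funext σ
  simp only [mulVec, dotProduct, Gram, diagonal_mul, of_apply, swapEigenvector, Pi.sub_apply,
    Pi.single_apply, mul_sub, mul_ite, mul_zero, Finset.sum_sub_distrib, Finset.sum_ite_eq',
    Finset.mem_univ, if_true, swap_inv, inv_one, mul_one, Nat.cast_mul, Pi.smul_apply, smul_eq_mul]
  have hcyc := σ.numCycles_mul_swap hxy
  rw [← cyc_eq_numCycles, ← cyc_eq_numCycles] at hcyc
  linear_combination mu2_eigen_identity h hcyc

theorem Ck_mulVec_swapEigenvector {k d D : ℕ} (hkdD : k ≤ d * D) {x y : Fin k} (hxy : x ≠ y) :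
    Ck k d D *ᵥ swapEigenvector d D (swap x y) =
      ((d * D ^ 2 - d) / (d ^ 2 * D ^ 2 - 1) : ℝ) • swapEigenvector d D (swap x y) := by
  have hk : 2 ≤ k := by
    have := x.isLt; have := y.isLt; have := Fin.val_ne_of_ne hxy
    omega
  have hG := (isUnit_iff_isUnit_det _).1 (isUnit_Gram hkdD)
  rw [Ck_eq_WgM_mul, ← mulVec_mulVec,
    diagonal_mul_Gram_mulVec_swapEigenvector (hk.trans hkdD) hxy, mulVec_smul, mulVec_mulVec, WgM,
    nonsing_inv_mul _ hG, one_mulVec]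

theorem Ck_mu2_eigenvalue_general (k d D : ℕ) (hk : 2 ≤ k) (hkdD : k ≤ d * D) :
    (Ck k d D).charpoly.IsRoot (((d : ℝ) * D ^ 2 - d) / ((d : ℝ) ^ 2 * D ^ 2 - 1)) ∧
    k.choose 2 ≤ (Ck k d D).charpoly.rootMultiplicity
      (((d : ℝ) * D ^ 2 - d) / ((d : ℝ) ^ 2 * D ^ 2 - 1)) := by
  have hsingle (t : {t : Perm (Fin k) // t.IsSwap}) :
      (Pi.single 1 ((D : ℝ) * (d + 1)) : Perm (Fin k) → ℝ) t.1 = 0 := by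
    obtain ⟨_, x, y, hxy, rfl⟩ := t
    exact Pi.single_eq_of_ne (mt swap_eq_one_iff.1 hxy) _
  have hmult : k.choose 2 ≤ (Ck k d D).charpoly.rootMultiplicity
      (((d : ℝ) * D ^ 2 - d) / ((d : ℝ) ^ 2 * D ^ 2 - 1)) :=
    calc k.choose 2 ≤ Nat.card {t : Perm (Fin k) // t.IsSwap} := by
          simpa using Perm.choose_two_le_natCard_isSwap (α := Fin k)
      _ ≤ _ := (Ck k d D).natCard_le_rootMultiplicity_charpoly
          (v := fun t => swapEigenvector d D t.1)
          (linearIndependent_single_sub Subtype.val_injective (by positivity) hsingle)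
          fun ⟨_, _, _, hxy, rfl⟩ => Ck_mulVec_swapEigenvector hkdD hxy
  exact ⟨(Polynomial.rootMultiplicity_pos (Ck k d D).charpoly_monic.ne_zero).1
    ((Nat.choose_pos hk).trans_le hmult), hmult⟩

/-- `μ₂ = (dD² − d)/(d²D² − 1)` is an eigenvalue of `C_k` whose algebraic multiplicity is at
least `k(k−1)/2 = (k choose 2)`, the number of transpositions in `S_k`. -/
theorem Ck_mu2_eigenvalue (k d D : ℕ) (hk : 2 ≤ k) (hd : 0 < d) (hD : 0 < D)
    (hkdD : k ≤ d * D) :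
    (Ck k d D).charpoly.IsRoot (((d : ℝ) * D ^ 2 - d) / ((d : ℝ) ^ 2 * D ^ 2 - 1)) ∧
    k.choose 2 ≤ (Ck k d D).charpoly.rootMultiplicity
      (((d : ℝ) * D ^ 2 - d) / ((d : ℝ) ^ 2 * D ^ 2 - 1)) :=
  Ck_mu2_eigenvalue_general k d D hk hkdD
end

section
/- Let d, D ≥ 2 be integers, let C_4 ∈ ℝ^{24×24} be the associated transfer matrix for k = 4, and for ρ ∈ S_4 let T_ρ ∈ ℝ^{24×24} have entries ⟨τ|T_ρ|θ⟩ = Σ_{σ∈S_4} Wg(στ⁻¹, dD) d^{#(σρ)} D^{#(σθ⁻¹)}. Let a, b ≥ 1 be integers, let v ∈ ℝ^{24} be a row vector with v C_4 = v and v·δ_e = 1, where δ_e is the standard basis column vector at the identity e, and set μ₂ = (dD² − d)/(d²D² − 1). Then there exist a constant K ∈ ℝ and constants C ≥ 0 and 0 ≤ ρ' < μ₂ such that for every integer r ≥ 0, | v T_{(12)}^a C_4^r (T_{(12)}^b + T_{(34)}^b − 2 T_{(13)}^b) δ_e − K μ₂^r | ≤ C (ρ')^r. (This is the transfer-matrix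 form of the statement that the average 2-norm correlation measure N(A:B) of the random MPS ensemble decays exponentially with correlation length ξ_1D = −1/log μ₂.) -/
/-!
Write `T_ρ = G(dD)⁻¹ M_ρ` with `M_ρ(σ, θ) = d^{#(σρ)} D^{#(σθ⁻¹)}`; then `T_ρ z = y` amounts to
`M_ρ z = G(dD) y`, which is checked entrywise. Right multiplication by a transposition changes
`#` by one, and for `|m - n| = 1` one has `d^m D^n = μ₂ (dD)^n + μ₂' (dD)^m` with
`μ₂' = (Dd² − D)/(d²D² − 1) = mu2 D d`. This gives, for transpositions `τ`,
`T_τ δ_e = μ₂ δ_e + μ₂' δ_τ`, `T_τ δ_τ = δ_τ` and `C₄ δ_τ = μ₂ δ_τ + μ₂' δ_e`.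
Hence `(T_{(12)}^b + T_{(34)}^b − 2T_{(13)}^b) δ_e` is a multiple of
`x = δ_{(12)} + δ_{(34)} − 2δ_{(13)}`, and `C₄ x = μ₂ x`, so the quantity is exactly `K μ₂^r`.
The Gram matrix is invertible, since otherwise `C₄ = 0` has no normalized fixed vector.
-/

open Equiv Matrix

/-- Transfer matrix `⟨τ|T_ρ|θ⟩ = Σ_σ Wg(στ⁻¹, dD) d^{#(σρ)} D^{#(σθ⁻¹)}`. -/
noncomputable def Tmat (k d D : ℕ) (ρ : Equiv.Perm (Fin k)) :
    Matrix (Equiv.Perm (Fin k)) (Equiv.Perm (Fin k)) ℝ :=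
  Matrix.of fun τ θ =>
    ∑ σ : Equiv.Perm (Fin k),
      WgM k (d * D) σ τ * (d : ℝ) ^ cyc (σ * ρ) * (D : ℝ) ^ cyc (σ * θ⁻¹)

/-- `μ₂ = (dD² − d)/(d²D² − 1)`. -/
noncomputable def mu2 (d D : ℕ) : ℝ :=
  ((d : ℝ) * D ^ 2 - d) / ((d : ℝ) ^ 2 * D ^ 2 - 1)

lemma cyc_inv {k : ℕ} (π : Perm (Fin k)) : cyc π⁻¹ = cyc π := by
  simp [cyc, Perm.cycleType_inv]

def CycAdjacent {k : ℕ} (ρ : Perm (Fin k)) : Prop :=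
  ∀ σ : Perm (Fin k), cyc (σ * ρ) + 1 = cyc σ ∨ cyc σ + 1 = cyc (σ * ρ)

lemma cycAdjacent_swap {i j : Fin 4} (h : i ≠ j) : CycAdjacent (swap i j) := by
  revert i j
  unfold CycAdjacent
  decide

lemma CycAdjacent.inv {k : ℕ} {ρ : Perm (Fin k)} (hρ : CycAdjacent ρ) : CycAdjacent ρ⁻¹ := by
  intro σ
  simpa only [inv_mul_cancel_right, or_comm] using hρ (σ * ρ⁻¹)

lemma gram_transpose (k q : ℕ) : (Gram k q)ᵀ = Gram k q := by
  ext σ τ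
  rw [transpose_apply, Gram, of_apply, of_apply, ← cyc_inv, _root_.mul_inv_rev, inv_inv]

lemma wgM_apply_comm (k q : ℕ) (σ τ : Perm (Fin k)) : WgM k q σ τ = WgM k q τ σ := by
  rw [← transpose_apply (WgM k q), WgM, transpose_nonsing_inv, gram_transpose]

lemma natCast_eq_mu2_add {d D : ℕ} (hdD : d * D ≠ 1) :
    (d : ℝ) = mu2 d D + mu2 D d * (d * D) := by
  have h : (d : ℝ) ^ 2 * D ^ 2 - 1 ≠ 0 := by
    rw [sub_ne_zero, ← mul_pow]
    norm_cast
    simpa [Nat.pow_eq_one] using hdD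
  rw [mu2, mu2]
  field_simp
  ring

lemma pow_mul_pow_eq_mu2 {d D : ℕ} (hdD : d * D ≠ 1) {m n : ℕ} (h : m + 1 = n ∨ n + 1 = m) :
    (d : ℝ) ^ m * D ^ n = mu2 d D * (d * D) ^ n + mu2 D d * (d * D) ^ m := by
  rcases h with rfl | rfl
  · linear_combination
      ((d : ℝ) * D) ^ m * natCast_eq_mu2_add (d := D) (D := d) (by rwa [mul_comm])
  · linear_combination ((d : ℝ) * D) ^ n * natCast_eq_mu2_add hdD

lemma mu2_pos {d D : ℕ} (hd : 0 < d) (hD : 1 < D) : 0 < mu2 d D := by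
  have hd' : (1 : ℝ) ≤ d := by exact_mod_cast hd
  have hD' : (2 : ℝ) ≤ D := by exact_mod_cast hD
  have hdD : (2 : ℝ) ≤ d * D := by nlinarith
  apply div_pos <;> nlinarith

lemma pow_mulVec_eq_smul {n R : Type*} [Fintype n] [DecidableEq n] [CommSemiring R]
    {A : Matrix n n R} {c : R} {x : n → R} (h : A *ᵥ x = c • x) (r : ℕ) :
    A ^ r *ᵥ x = c ^ r • x := by
  induction r with
  | zero => simp
  | succ r ih => rw [pow_succ', ← mulVec_mulVec, ih, mulVec_smul, h, smul_smul, ← pow_succ]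

noncomputable def weightMat (k d D : ℕ) (ρ : Perm (Fin k)) :
    Matrix (Perm (Fin k)) (Perm (Fin k)) ℝ :=
  of fun σ θ => (d : ℝ) ^ cyc (σ * ρ) * (D : ℝ) ^ cyc (σ * θ⁻¹)

lemma tmat_eq_inv_gram_mul (k d D : ℕ) (ρ : Perm (Fin k)) :
    Tmat k d D ρ = (Gram k (d * D))⁻¹ * weightMat k d D ρ := by
  ext τ θ
  simp only [Tmat, weightMat, mul_apply, of_apply]
  refine Finset.sum_congr rfl fun σ _ => ?_
  rw [wgM_apply_comm, WgM, mul_assoc]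

lemma ck_eq_tmat_one (k d D : ℕ) : Ck k d D = Tmat k d D 1 := by
  ext τ θ
  simp [Ck, Tmat]

section Transfer

variable {k d D : ℕ}

lemma weightMat_mulVec_single (ρ π σ : Perm (Fin k)) :
    (weightMat k d D ρ *ᵥ Pi.single π 1) σ = (d : ℝ) ^ cyc (σ * ρ) * (D : ℝ) ^ cyc (σ * π⁻¹) := by
  rw [mulVec_single_one, col_apply, weightMat, of_apply]

lemma gram_mulVec_single (q : ℕ) (π σ : Perm (Fin k)) :
    (Gram k q *ᵥ Pi.single π 1) σ = (q : ℝ) ^ cyc (σ * π⁻¹) := by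
  rw [mulVec_single_one, col_apply, Gram, of_apply]

lemma tmat_mulVec_eq_of_weightMat_mulVec (hG : IsUnit (Gram k (d * D)).det)
    {ρ : Perm (Fin k)} {z y : Perm (Fin k) → ℝ}
    (h : weightMat k d D ρ *ᵥ z = Gram k (d * D) *ᵥ y) : Tmat k d D ρ *ᵥ z = y := by
  rw [tmat_eq_inv_gram_mul, ← mulVec_mulVec, h, mulVec_mulVec, nonsing_inv_mul _ hG, one_mulVec]

lemma tmat_mulVec_single_inv (hG : IsUnit (Gram k (d * D)).det) (ρ : Perm (Fin k)) :
    Tmat k d D ρ *ᵥ Pi.single ρ⁻¹ 1 = Pi.single ρ⁻¹ 1 := by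
  refine tmat_mulVec_eq_of_weightMat_mulVec hG (funext fun σ => ?_)
  rw [weightMat_mulVec_single, gram_mulVec_single, inv_inv, Nat.cast_mul, mul_pow]

lemma tmat_mulVec_single_one (hG : IsUnit (Gram k (d * D)).det) (hdD : d * D ≠ 1)
    {ρ : Perm (Fin k)} (hρ : CycAdjacent ρ) :
    Tmat k d D ρ *ᵥ Pi.single 1 1 = mu2 d D • Pi.single 1 1 + mu2 D d • Pi.single ρ⁻¹ 1 := by
  refine tmat_mulVec_eq_of_weightMat_mulVec hG (funext fun σ => ?_)
  simp only [mulVec_add, mulVec_smul, Pi.add_apply, Pi.smul_apply, smul_eq_mul,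
    weightMat_mulVec_single, gram_mulVec_single, inv_one, mul_one, inv_inv, Nat.cast_mul]
  exact pow_mul_pow_eq_mu2 hdD (hρ σ)

lemma tmat_pow_mulVec_single_one (hG : IsUnit (Gram k (d * D)).det) (hdD : d * D ≠ 1)
    {ρ : Perm (Fin k)} (hρ : CycAdjacent ρ) (n : ℕ) :
    Tmat k d D ρ ^ n *ᵥ Pi.single 1 1 =
      mu2 d D ^ n • Pi.single 1 1 +
        (mu2 D d * ∑ i ∈ Finset.range n, mu2 d D ^ i) • Pi.single ρ⁻¹ 1 := by
  induction n with
  | zero => simp only [pow_zero, one_mulVec, one_smul, Finset.sum_range_zero, mul_zero, zero_smul,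
      add_zero]
  | succ n ih =>
    rw [pow_succ', ← mulVec_mulVec, ih, mulVec_add, mulVec_smul, mulVec_smul,
      tmat_mulVec_single_one hG hdD hρ, tmat_mulVec_single_inv hG, Finset.sum_range_succ]
    module

lemma ck_mulVec_single (hG : IsUnit (Gram k (d * D)).det) (hdD : d * D ≠ 1)
    {π : Perm (Fin k)} (hπ : CycAdjacent π) :
    Ck k d D *ᵥ Pi.single π 1 = mu2 d D • Pi.single π 1 + mu2 D d • Pi.single 1 1 := by
  rw [ck_eq_tmat_one]
  refine tmat_mulVec_eq_of_weightMat_mulVec hG (funext fun σ => ?_)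
  simp only [mulVec_add, mulVec_smul, Pi.add_apply, Pi.smul_apply, smul_eq_mul,
    weightMat_mulVec_single, gram_mulVec_single, inv_one, mul_one, Nat.cast_mul]
  exact pow_mul_pow_eq_mu2 hdD (hπ.inv σ).symm

-- The `δ_e` components cancel because `1 + 1 - 2 = 0`.
lemma ck_mulVec_combination (hG : IsUnit (Gram k (d * D)).det) (hdD : d * D ≠ 1)
    {π₁ π₂ π₃ : Perm (Fin k)} (h₁ : CycAdjacent π₁) (h₂ : CycAdjacent π₂) (h₃ : CycAdjacent π₃) :
    Ck k d D *ᵥ (Pi.single π₁ 1 + Pi.single π₂ 1 - (2 : ℝ) • Pi.single π₃ 1) =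
      mu2 d D • (Pi.single π₁ 1 + Pi.single π₂ 1 - (2 : ℝ) • Pi.single π₃ 1) := by
  rw [mulVec_sub, mulVec_add, mulVec_smul, ck_mulVec_single hG hdD h₁, ck_mulVec_single hG hdD h₂,
    ck_mulVec_single hG hdD h₃]
  module

lemma tmat_pow_combination_mulVec_single_one (hG : IsUnit (Gram k (d * D)).det)
    (hdD : d * D ≠ 1) {ρ₁ ρ₂ ρ₃ : Perm (Fin k)}
    (h₁ : CycAdjacent ρ₁) (h₂ : CycAdjacent ρ₂) (h₃ : CycAdjacent ρ₃) (n : ℕ) :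
    (Tmat k d D ρ₁ ^ n + Tmat k d D ρ₂ ^ n - (2 : ℝ) • Tmat k d D ρ₃ ^ n) *ᵥ Pi.single 1 1 =
      (mu2 D d * ∑ i ∈ Finset.range n, mu2 d D ^ i) •
        (Pi.single ρ₁⁻¹ 1 + Pi.single ρ₂⁻¹ 1 - (2 : ℝ) • Pi.single ρ₃⁻¹ 1) := by
  rw [sub_mulVec, add_mulVec, smul_mulVec, tmat_pow_mulVec_single_one hG hdD h₁,
    tmat_pow_mulVec_single_one hG hdD h₂, tmat_pow_mulVec_single_one hG hdD h₃]
  module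

/-- Mathlib's inverse of a singular matrix is `0`, and then so is `Ck k d D`. -/
lemma isUnit_det_gram_of_vecMul_ck {v : Perm (Fin k) → ℝ} (hv : v ᵥ* Ck k d D = v)
    (hv0 : v ≠ 0) : IsUnit (Gram k (d * D)).det := by
  by_contra hG
  have hW : WgM k (d * D) = 0 := nonsing_inv_apply_not_isUnit _ hG
  refine hv0 ?_
  rw [← hv, show Ck k d D = 0 by ext; simp [Ck, hW], vecMul_zero]

end Transfer

theorem mps_norm_exponential_decay_general (d D : ℕ) (hd : 2 ≤ d) (hD : 2 ≤ D)
    (a b : ℕ) (v : Equiv.Perm (Fin 4) → ℝ)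
    (hv : v ᵥ* Ck 4 d D = v)
    (hv1 : v ⬝ᵥ Pi.single (1 : Equiv.Perm (Fin 4)) (1 : ℝ) = 1) :
    ∃ K C ρ' : ℝ, 0 ≤ C ∧ 0 ≤ ρ' ∧ ρ' < mu2 d D ∧
      ∀ r : ℕ,
        |v ⬝ᵥ ((Tmat 4 d D (Equiv.swap (0 : Fin 4) 1)) ^ a * (Ck 4 d D) ^ r *
            ((Tmat 4 d D (Equiv.swap (0 : Fin 4) 1)) ^ b
              + (Tmat 4 d D (Equiv.swap (2 : Fin 4) 3)) ^ b
              - (2 : ℝ) • (Tmat 4 d D (Equiv.swap (0 : Fin 4) 2)) ^ b)).mulVec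
            (Pi.single (1 : Equiv.Perm (Fin 4)) (1 : ℝ))
          - K * (mu2 d D) ^ r| ≤ C * ρ' ^ r := by
  have hG : IsUnit (Gram 4 (d * D)).det :=
    isUnit_det_gram_of_vecMul_ck hv (by rintro rfl; simp at hv1)
  have hdD : d * D ≠ 1 := by nlinarith
  have h₀₁ := cycAdjacent_swap (show (0 : Fin 4) ≠ 1 by decide)
  have h₂₃ := cycAdjacent_swap (show (2 : Fin 4) ≠ 3 by decide)
  have h₀₂ := cycAdjacent_swap (show (0 : Fin 4) ≠ 2 by decide)
  have hS := tmat_pow_combination_mulVec_single_one hG hdD h₀₁ h₂₃ h₀₂ b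
  simp only [swap_inv] at hS
  set s := mu2 D d * ∑ i ∈ Finset.range b, mu2 d D ^ i
  set x : Perm (Fin 4) → ℝ :=
    Pi.single (swap 0 1) 1 + Pi.single (swap 2 3) 1 - (2 : ℝ) • Pi.single (swap 0 2) 1
  -- The error term vanishes: the quantity is exactly `K μ₂ ^ r`.
  refine ⟨s * (v ⬝ᵥ (Tmat 4 d D (swap 0 1) ^ a *ᵥ x)), 0, 0, le_rfl, le_rfl,
    mu2_pos (by omega) (by omega), fun r => ?_⟩
  rw [← mulVec_mulVec, ← mulVec_mulVec, hS, mulVec_smul,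
    pow_mulVec_eq_smul (ck_mulVec_combination hG hdD h₀₁ h₂₃ h₀₂) r, mulVec_smul, mulVec_smul,
    dotProduct_smul, dotProduct_smul, smul_eq_mul, smul_eq_mul, zero_mul, abs_nonpos_iff,
    sub_eq_zero]
  ring

/-- Transfer-matrix form of the exponential decay of the average 2-norm correlation
measure `E N(A:B)` of the random MPS ensemble: for any normalized left fixed vector `v` of
`C₄`, the quantity `v T_{(12)}^a C₄^r (T_{(12)}^b + T_{(34)}^b − 2T_{(13)}^b) δ_e` equals
`K μ₂^r` up to an error of size `C (ρ')^r` with `ρ' < μ₂`; i.e. the decay has correlation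
length `ξ₁D = −1/log μ₂`. -/
theorem mps_norm_exponential_decay (d D : ℕ) (hd : 2 ≤ d) (hD : 2 ≤ D)
    (a b : ℕ) (ha : 1 ≤ a) (hb : 1 ≤ b) (v : Equiv.Perm (Fin 4) → ℝ)
    (hv : v ᵥ* Ck 4 d D = v)
    (hv1 : v ⬝ᵥ Pi.single (1 : Equiv.Perm (Fin 4)) (1 : ℝ) = 1) :
    ∃ K C ρ' : ℝ, 0 ≤ C ∧ 0 ≤ ρ' ∧ ρ' < mu2 d D ∧
      ∀ r : ℕ,
        |v ⬝ᵥ ((Tmat 4 d D (Equiv.swap (0 : Fin 4) 1)) ^ a * (Ck 4 d D) ^ r *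
            ((Tmat 4 d D (Equiv.swap (0 : Fin 4) 1)) ^ b
              + (Tmat 4 d D (Equiv.swap (2 : Fin 4) 3)) ^ b
              - (2 : ℝ) • (Tmat 4 d D (Equiv.swap (0 : Fin 4) 2)) ^ b)).mulVec
            (Pi.single (1 : Equiv.Perm (Fin 4)) (1 : ℝ))
          - K * (mu2 d D) ^ r| ≤ C * ρ' ^ r :=
  mps_norm_exponential_decay_general d D hd hD a b v hv hv1
end
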